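/- arXiv:2107.06969 — 6 statements merged into one kernel-verified Lean document; each statement's English description precedes it below -/
import Mathlib

section
/- Let m, p, r be positive integers with p prime, gcd(p(r-1), m) = 1 and r^p ≡ 1 (mod m). Let N be a cyclic group of order m, M a subgroup of N, u ∈ N, and 0 ≤ s < s' ≤ p-1. If u^(r^s) and u^(r^{s'}) lie in the same coset of M in N, then u ∈ M (and hence u^(r^t) ∈ M for all t ∈ [0, p-1]). -/
/-!
Write `d = s' - s` and `v = u ^ r ^ s`, so that `u ^ r ^ s' = v ^ r ^ d` and the hypothesis says
`v ^ (r ^ d - 1) ∈ M`. Both `r` and `r ^ d - 1` are prime to `m = |N|`: the first because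
`r ^ p ≡ 1`, the second because `gcd (r ^ d - 1, r ^ p - 1) = r ^ gcd (d, p) - 1 = r - 1`.
Raising to a power prime to `|N|` is a bijection of `N`, so first `v ∈ M` and then `u ∈ M`.
-/

theorem Subgroup.mem_of_pow_mem_of_coprime {G : Type*} [Group G] (H : Subgroup G) {x : G}
    {n : ℕ} (hn : n.Coprime (Nat.card G)) (hx : x ^ n ∈ H) : x ∈ H := by
  obtain ⟨k, hk⟩ :=
    exists_pow_eq_self_of_coprime (hn.coprime_dvd_right (_root_.orderOf_dvd_natCard x))
  exact hk ▸ H.pow_mem hx k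

theorem Subgroup.pow_pred_mem_of_mul_inv_pow_mem {G : Type*} [Group G] (H : Subgroup G) {x : G}
    {n : ℕ} (hx : x * (x ^ n)⁻¹ ∈ H) : x ^ (n - 1) ∈ H := by
  rcases n with _ | n
  · simp
  · rw [pow_succ, mul_inv_rev, mul_inv_cancel_left] at hx
    simpa using H.inv_mem hx

theorem Nat.Coprime.of_pow_modEq_one {r p m : ℕ} (hp : p ≠ 0) (h : r ^ p ≡ 1 [MOD m]) :
    r.Coprime m := by
  have hrp : (r ^ p).Coprime m := by simpa [Nat.Coprime] using h.gcd_eq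
  exact (Nat.coprime_pow_left_iff (Nat.pos_of_ne_zero hp) r m).mp hrp

theorem Nat.Coprime.pow_sub_one_of_pow_modEq_one {r p d m : ℕ} (hd : d.Coprime p)
    (hr : (r - 1).Coprime m) (h : r ^ p ≡ 1 [MOD m]) : (r ^ d - 1).Coprime m := by
  have hm : m ∣ r ^ p - 1 := Nat.dvd_of_mod_eq_zero (Nat.sub_mod_eq_zero_of_mod_eq h)
  have hg : Nat.gcd (r ^ d - 1) m ∣ r - 1 := by
    have := Nat.dvd_gcd (Nat.gcd_dvd_left (r ^ d - 1) m) ((Nat.gcd_dvd_right _ m).trans hm)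
    rwa [Nat.pow_sub_one_gcd_pow_sub_one, hd, pow_one] at this
  exact Nat.eq_one_of_dvd_coprimes hr hg (Nat.gcd_dvd_right _ m)

theorem stmt_1_general (m p r : ℕ)
    (hpp : p.Prime) (hgcd : Nat.gcd (p * (r - 1)) m = 1) (hmod : r ^ p ≡ 1 [MOD m])
    (N : Type*) [Group N] [Fintype N] (hcard : Fintype.card N = m)
    (M : Subgroup N) (u : N) (s s' : ℕ) (hss : s < s') (hs' : s' ≤ p - 1)
    (h : u ^ (r ^ s) * (u ^ (r ^ s'))⁻¹ ∈ M) :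
    u ∈ M ∧ ∀ t ≤ p - 1, u ^ (r ^ t) ∈ M := by
  suffices hu : u ∈ M from ⟨hu, fun t _ => M.pow_mem hu _⟩
  obtain ⟨d, rfl⟩ : ∃ d, s' = s + d := ⟨s' - s, by omega⟩
  have hcard' : Nat.card N = m := Nat.card_eq_fintype_card.trans hcard
  have hdp : d.Coprime p :=
    (hpp.coprime_iff_not_dvd.mpr (Nat.not_dvd_of_pos_of_lt (by omega) (by omega))).symm
  have hr : r.Coprime m := Nat.Coprime.of_pow_modEq_one hpp.ne_zero hmod
  have hrd : (r ^ d - 1).Coprime m :=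
    Nat.Coprime.pow_sub_one_of_pow_modEq_one hdp (Nat.Coprime.coprime_mul_left hgcd) hmod
  rw [pow_add, pow_mul] at h
  have hv : u ^ r ^ s ∈ M :=
    M.mem_of_pow_mem_of_coprime (hcard' ▸ hrd) (M.pow_pred_mem_of_mul_inv_pow_mem h)
  exact M.mem_of_pow_mem_of_coprime (hcard' ▸ hr.pow_left s) hv

theorem stmt_1 (m p r : ℕ) (hm : 0 < m) (hp : 0 < p) (hr : 0 < r)
    (hpp : p.Prime) (hgcd : Nat.gcd (p * (r - 1)) m = 1) (hmod : r ^ p ≡ 1 [MOD m])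
    (N : Type*) [Group N] [Fintype N] (y : N) (hcard : Fintype.card N = m)
    (hgen : ∀ n : N, n ∈ Subgroup.zpowers y)
    (M : Subgroup N) (u : N) (s s' : ℕ) (hss : s < s') (hs' : s' ≤ p - 1)
    (h : u ^ (r ^ s) * (u ^ (r ^ s'))⁻¹ ∈ M) :
    u ∈ M ∧ ∀ t ≤ p - 1, u ^ (r ^ t) ∈ M :=
  stmt_1_general m p r hpp hgcd hmod N hcard M u s s' hss hs' h
end

section
/- Let m, p, r be positive integers with p prime, gcd(p(r-1), m) = 1 and r^p ≡ 1 (mod m). Let N be a cyclic group of order m and u ∈ N with u ≠ 1. Then for all 0 ≤ s < s' ≤ p-1, u^(r^s) ≠ u^(r^{s'}). -/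
theorem stmt_2 (m p r : ℕ) (hm : 0 < m) (hp : 0 < p) (hr : 0 < r)
    (hpp : p.Prime) (hgcd : Nat.gcd (p * (r - 1)) m = 1) (hmod : r ^ p ≡ 1 [MOD m])
    (N : Type*) [Group N] [Fintype N] (hcard : Fintype.card N = m) [IsCyclic N]
    (u : N) (hu : u ≠ 1) :
    ∀ s s' : ℕ, s < s' → s' ≤ p - 1 → u ^ (r ^ s) ≠ u ^ (r ^ s') := by
  intro s s' hss hs' heq
  set q := orderOf u with hq
  have hq1 : q ≠ 1 := by simpa [hq, orderOf_eq_one_iff] using hu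
  have hq0 : 0 < q := orderOf_pos u
  haveI : NeZero q := ⟨hq0.ne'⟩
  have hqm : q ∣ m := hcard ▸ orderOf_dvd_card
  have h1 : r ^ s ≡ r ^ s' [MOD q] := (pow_eq_pow_iff_modEq).mp heq
  have hle : r ^ s ≤ r ^ s' := Nat.pow_le_pow_right hr hss.le
  have h2 : q ∣ r ^ s' - r ^ s := (Nat.modEq_iff_dvd' hle).mp h1
  set d := s' - s with hd
  have hds : s + d = s' := by omega
  have h3 : r ^ s' - r ^ s = r ^ s * (r ^ d - 1) := by
    rw [Nat.mul_sub, mul_one, ← pow_add, hds]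
  -- r is coprime to m
  have hrm : Nat.Coprime r m := by
    have h4 : m ∣ r ^ p - 1 :=
      (Nat.modEq_iff_dvd' (Nat.one_le_pow _ _ hr)).mp hmod.symm
    have h5 : Nat.gcd r m ∣ r ^ p := dvd_pow (Nat.gcd_dvd_left r m) hp.ne'
    have h6 : Nat.gcd r m ∣ r ^ p - 1 := (Nat.gcd_dvd_right r m).trans h4
    have h7 := Nat.dvd_sub h5 h6
    rw [Nat.sub_sub_self (Nat.one_le_pow _ _ hr)] at h7
    exact Nat.dvd_one.mp h7
  have hrq : Nat.Coprime (r ^ s) q :=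
    ((hrm.coprime_dvd_right hqm).pow_left s)
  have h7 : q ∣ r ^ d - 1 := by
    rw [h3] at h2
    exact (Nat.Coprime.dvd_of_dvd_mul_left hrq.symm h2)
  -- work in ZMod q
  have hcast : ∀ k : ℕ, q ∣ r ^ k - 1 → ((r : ZMod q)) ^ k = 1 := by
    intro k hk
    have : ((r ^ k - 1 : ℕ) : ZMod q) = 0 := (ZMod.natCast_eq_zero_iff _ _).mpr hk
    rw [Nat.cast_sub (Nat.one_le_pow _ _ hr)] at this
    push_cast at this
    linear_combination this
  have ht1 : ((r : ZMod q)) ^ d = 1 := hcast d h7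
  have hqrp : q ∣ r ^ p - 1 := by
    have := (Nat.ModEq.of_dvd hqm hmod).symm
    exact (Nat.modEq_iff_dvd' (Nat.one_le_pow _ _ hr)).mp this
  have ht2 : ((r : ZMod q)) ^ p = 1 := hcast p hqrp
  -- gcd d p = 1
  have hd0 : 0 < d := by omega
  have hdp : d < p := by omega
  have hcop : Nat.Coprime d p :=
    ((hpp.coprime_iff_not_dvd.mpr fun h => absurd (Nat.le_of_dvd hd0 h) (not_le.mpr hdp))).symm
  have hord : orderOf ((r : ZMod q)) ∣ Nat.gcd d p :=
    Nat.dvd_gcd (orderOf_dvd_of_pow_eq_one ht1) (orderOf_dvd_of_pow_eq_one ht2)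
  rw [hcop] at hord
  have hr1 : (r : ZMod q) = 1 := orderOf_eq_one_iff.mp (Nat.dvd_one.mp hord)
  have hqr1 : q ∣ r - 1 := by
    have : ((r - 1 : ℕ) : ZMod q) = 0 := by
      rw [Nat.cast_sub hr, hr1]; ring
    exact (ZMod.natCast_eq_zero_iff _ _).mp this
  have : q ∣ 1 := by
    rw [← hgcd]
    exact Nat.dvd_gcd (hqr1.trans (Dvd.intro_left p rfl)) hqm
  exact hq1 (Nat.dvd_one.mp this)
end

section
/- Let m, p, r be positive integers with p prime, gcd(p(r-1), m) = 1 and r^p ≡ 1 (mod m). Then m ≡ 1 (mod p). -/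
lemma aux_prime_modeq (p r q : ℕ) (hp : 0 < p) (hr : 0 < r) (hpp : p.Prime)
    (hq : q.Prime) (hg : Nat.gcd (p * (r - 1)) q = 1) (hmod : r ^ p ≡ 1 [MOD q]) :
    q ≡ 1 [MOD p] := by
  haveI : Fact q.Prime := ⟨hq⟩
  set x : ZMod q := (r : ZMod q) with hx
  have hxp : x ^ p = 1 := by
    have := (ZMod.natCast_eq_natCast_iff _ _ _).mpr hmod
    push_cast at this
    simpa [hx] using this
  have hx0 : x ≠ 0 := by
    intro h0
    rw [h0, zero_pow hp.ne'] at hxp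
    exact zero_ne_one hxp
  have hcop : Nat.Coprime (r - 1) q := Nat.Coprime.coprime_dvd_left (dvd_mul_left (r - 1) p) hg
  have hx1 : x ≠ 1 := by
    intro h1
    have : (r : ℕ) ≡ 1 [MOD q] := by
      have : ((r : ℕ) : ZMod q) = ((1 : ℕ) : ZMod q) := by simpa [hx] using h1
      exact (ZMod.natCast_eq_natCast_iff _ _ _).mp this
    have hdvd : q ∣ r - 1 := (Nat.modEq_iff_dvd' hr).mp this.symm
    have : q ∣ 1 := hcop ▸ Nat.dvd_gcd hdvd dvd_rfl
    exact hq.one_lt.ne' (Nat.dvd_one.mp this)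
  have hord : orderOf x ∣ p := orderOf_dvd_of_pow_eq_one hxp
  have hordp : orderOf x = p := by
    rcases (Nat.dvd_prime hpp).mp hord with h | h
    · exact absurd (orderOf_eq_one_iff.mp h) hx1
    · exact h
  have hdvd : p ∣ q - 1 := by
    have := ZMod.orderOf_dvd_card_sub_one hx0
    rwa [hordp] at this
  exact ((Nat.modEq_iff_dvd' hq.one_le).mpr hdvd).symm

theorem stmt_5 (m p r : ℕ) (hm : 0 < m) (hp : 0 < p) (hr : 0 < r)
    (hpp : p.Prime) (hgcd : Nat.gcd (p * (r - 1)) m = 1) (hmod : r ^ p ≡ 1 [MOD m]) :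
    m ≡ 1 [MOD p] := by
  induction m using Nat.strong_induction_on with
  | _ m ih =>
    by_cases h1 : m = 1
    · rw [h1]
    · set q := m.minFac with hqdef
      have hq : q.Prime := Nat.minFac_prime h1
      have hqd : q ∣ m := Nat.minFac_dvd m
      set k := m / q with hkdef
      have hkd : k ∣ m := Nat.div_dvd_of_dvd hqd
      have hmk : m = q * k := (Nat.mul_div_cancel' hqd).symm
      have hk0 : 0 < k := Nat.div_pos (Nat.le_of_dvd hm hqd) hq.pos
      have hklt : k < m := Nat.div_lt_self hm hq.one_lt
      have hq1 : q ≡ 1 [MOD p] :=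
        aux_prime_modeq p r q hp hr hpp hq
          (Nat.Coprime.coprime_dvd_right hqd hgcd) (hmod.of_dvd hqd)
      have hk1 : k ≡ 1 [MOD p] :=
        ih k hklt hk0 (Nat.Coprime.coprime_dvd_right hkd hgcd) (hmod.of_dvd hkd)
      calc m = q * k := hmk
        _ ≡ 1 * 1 [MOD p] := hq1.mul hk1
        _ = 1 := one_mul 1
end

section
/- Let G be a finite group and S a product-one free sequence over G (i.e., no nonempty subsequence of S has 1 among its products). Then the set Π(S) of all products of nonempty subsequences of S has cardinality at least |S|. -/
/-!
Adjoining an element `a` to a product-one free sequence `S` strictly enlarges `Π(S)`. Otherwise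
`A := Π(a S) = Π(S)` satisfies `a ∈ A` and `a • A ⊆ A`; as `A` is finite (`S` has finitely many
subsequences and orderings), `a • A = A`, so `a = a * x` for some `x ∈ Π(S)`, i.e. `1 ∈ Π(S)`.
Induction on `S` then gives `|Π(S)| ≥ |S|`.
-/

/-- The set of products of a sequence (multiset) `S` over all orderings. -/
def piSet {G : Type*} [Group G] (S : Multiset G) : Set G :=
  {g | ∃ l : List G, (l : Multiset G) = S ∧ l.prod = g}

/-- The set `Π(S)` of all products of nonempty subsequences of `S`. -/
def subProds {G : Type*} [Group G] (S : Multiset G) : Set G :=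
  {g | ∃ T : Multiset G, T ≤ S ∧ T ≠ 0 ∧ g ∈ piSet T}

open scoped Pointwise

theorem Set.Finite.one_mem_of_smul_subset {G : Type*} [Group G] {A : Set G} {a : G}
    (hA : A.Finite) (ha : a ∈ A) (hsub : a • A ⊆ A) : (1 : G) ∈ A := by
  have hstab : a • A = A := MulAction.mem_stabilizer_iff.mp <|
    (MulAction.mem_stabilizer_set_iff_smul_set_subset hA).mpr hsub
  obtain ⟨x, hx, hax⟩ := Set.mem_smul_set.mp (hstab.symm ▸ ha : a ∈ a • A)
  rwa [mul_eq_left.mp hax] at hx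

section

variable {G : Type*} [Group G]

theorem piSet_finite (S : Multiset G) : (piSet S).Finite := by
  refine ((Multiset.lists S).finite_toSet.image List.prod).subset ?_
  rintro g ⟨l, rfl, rfl⟩
  exact ⟨l, by simp, rfl⟩

theorem subProds_finite (S : Multiset G) : (subProds S).Finite := by
  refine (S.powerset.finite_toSet.biUnion fun T _ => piSet_finite T).subset ?_
  rintro g ⟨T, hT, -, hg⟩
  exact Set.mem_biUnion (by simpa using hT) hg

theorem subProds_mono {S S' : Multiset G} (h : S ≤ S') : subProds S ⊆ subProds S' :=
  fun _ ⟨T, hT, hne, hg⟩ => ⟨T, hT.trans h, hne, hg⟩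

theorem mem_subProds_cons_self (a : G) (S : Multiset G) : a ∈ subProds (a ::ₘ S) :=
  ⟨{a}, Multiset.singleton_le.mpr (Multiset.mem_cons_self a S), Multiset.singleton_ne_zero a,
    [a], rfl, List.prod_singleton⟩

theorem smul_subProds_subset_cons (a : G) (S : Multiset G) :
    a • subProds S ⊆ subProds (a ::ₘ S) := by
  rintro _ ⟨x, ⟨T, hT, -, l, rfl, rfl⟩, rfl⟩
  exact ⟨a ::ₘ l, Multiset.cons_le_cons a hT, Multiset.cons_ne_zero,
    a :: l, rfl, List.prod_cons⟩

theorem subProds_ssubset_cons {a : G} {S : Multiset G} (h : (1 : G) ∉ subProds (a ::ₘ S)) :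
    subProds S ⊂ subProds (a ::ₘ S) := by
  refine (subProds_mono (Multiset.le_cons_self S a)).ssubset_of_ne fun heq => h ?_
  refine (subProds_finite _).one_mem_of_smul_subset (mem_subProds_cons_self a S) ?_
  simpa only [← heq] using smul_subProds_subset_cons a S

end

theorem stmt_7_general {G : Type*} [Group G] (S : Multiset G)
    (h : (1 : G) ∉ subProds S) :
    Multiset.card S ≤ Nat.card (subProds S) := by
  induction S using Multiset.induction with
  | empty => simp
  | cons a S ih =>
    have hS : (1 : G) ∉ subProds S := fun h1 => h (subProds_mono (Multiset.le_cons_self S a) h1)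
    calc Multiset.card (a ::ₘ S) = Multiset.card S + 1 := Multiset.card_cons a S
      _ ≤ (subProds S).ncard + 1 := Nat.add_le_add_right (ih hS) 1
      _ ≤ (subProds (a ::ₘ S)).ncard :=
        Set.ncard_lt_ncard (subProds_ssubset_cons h) (subProds_finite _)

theorem stmt_7 {G : Type*} [Group G] [Finite G] (S : Multiset G)
    (h : (1 : G) ∉ subProds S) :
    Multiset.card S ≤ Nat.card (subProds S) :=
  stmt_7_general S h
end

section
/- Let G be the metacyclic group ⟨x, y | x^p = y^m = 1, x^{-1} y x = y^r⟩ where p is the smallest prime divisor of |G| = pm and gcd(p(r-1), m) = 1. Then the sequence S_0 = x^{[p-1]} · y^{[m-1]} (the element x repeated p-1 times together with y repeated m-1 times) is product-one free; consequently d(G) ≥ m + p - 2. -/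
/-- The small Davenport constant: the maximal length of a product-one free sequence. -/
noncomputable def dG (G : Type*) [Group G] : ℕ :=
  sSup {n | ∃ S : Multiset G, Multiset.card S = n ∧ (1 : G) ∉ subProds S}

/-!
Since `x⁻¹ * y * x ∈ ⟨y⟩`, pushing every `x` of a word in `x` and `y` to the left only replaces
the `y`'s by other elements of `⟨y⟩`, so a product of `a` copies of `x` and some copies of `y`, in
any order, lies in `x ^ a * ⟨y⟩`. If it equals `1`, then `x ^ a ∈ ⟨x⟩ ∩ ⟨y⟩`, which is trivial as
the orders of `x` and `y` are coprime; so `a = 0` and the product is a power `y ^ b` with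
`b < ord y`, forcing `b = 0`. The bound on `d(G)` is then the definition of `dG`, which is a
genuine supremum because, by pigeonhole on prefix products, every sequence of length `|G|`
contains a product-one subsequence.
-/

open Subgroup

section

variable {G : Type*} [Group G]

lemma sublist_prod_mem_subProds {l s : List G} (hs : s.Sublist l) (hne : s ≠ []) :
    s.prod ∈ subProds (l : Multiset G) :=
  ⟨s, Multiset.coe_le.mpr hs.subperm, by simpa using hne, s, rfl, rfl⟩

lemma one_mem_subProds_of_card_le [Fintype G] {S : Multiset G}
    (hS : Fintype.card G ≤ Multiset.card S) : (1 : G) ∈ subProds S := by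
  obtain ⟨l, rfl⟩ := Quot.exists_rep S
  replace hS : Fintype.card G < Fintype.card (Fin (l.length + 1)) := by
    simp only [Fintype.card_fin]
    exact Nat.lt_succ_of_le hS
  obtain ⟨i, j, hij, heq⟩ :=
    Fintype.exists_ne_map_eq_of_card_lt (fun i : Fin (l.length + 1) => (l.take i).prod) hS
  wlog hlt : i < j generalizing i j
  · exact this j i hij.symm heq.symm (hij.lt_or_gt.resolve_left hlt)
  have hprod : ((l.take j).drop i).prod = 1 := by
    have := List.prod_take_mul_prod_drop (l.take j) i
    rwa [List.take_take, min_eq_left (Fin.le_iff_val_le_val.mp hlt.le), heq, mul_eq_left] at this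
  rw [← hprod]
  refine sublist_prod_mem_subProds ((List.drop_sublist _ _).trans (List.take_sublist _ _)) ?_
  rw [← List.length_pos_iff, List.length_drop, List.length_take]
  omega

lemma card_le_dG [Fintype G] {S : Multiset G} (hS : (1 : G) ∉ subProds S) :
    Multiset.card S ≤ dG G := by
  refine le_csSup ⟨Fintype.card G, ?_⟩ ⟨S, rfl, hS⟩
  rintro n ⟨T, rfl, hT⟩
  by_contra! hlt
  exact hT (one_mem_subProds_of_card_le hlt.le)

lemma List.exists_prod_eq_pow_count_mul [DecidableEq G] {H : Subgroup G} {x : G}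
    (hx : ∀ h ∈ H, x⁻¹ * h * x ∈ H) {l : List G} (hl : ∀ g ∈ l, g = x ∨ g ∈ H) :
    ∃ h ∈ H, l.prod = x ^ l.count x * h := by
  induction l using List.reverseRecOn with
  | nil => exact ⟨1, H.one_mem, by simp⟩
  | append_singleton l g ih =>
    obtain ⟨h, hH, hprod⟩ := ih fun g hg => hl g (List.mem_append_left _ hg)
    by_cases hg : g = x
    · subst hg
      refine ⟨g⁻¹ * h * g, hx h hH, ?_⟩
      simp only [List.prod_append, List.prod_singleton, hprod, List.count_append,
        List.count_singleton_self, pow_succ]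
      group
    · have hgH := (hl g (by simp)).resolve_left hg
      refine ⟨h * g, H.mul_mem hH hgH, ?_⟩
      simp [hprod, hg, mul_assoc]

lemma conj_mem_zpowers_of_conj_mem {x y : G} (hy : x⁻¹ * y * x ∈ zpowers y) :
    ∀ g ∈ zpowers y, x⁻¹ * g * x ∈ zpowers y := by
  rintro _ ⟨k, rfl⟩
  have hconj := map_zpow (MulAut.conj x⁻¹) y k
  simp only [MulAut.conj_apply, inv_inv] at hconj
  exact hconj ▸ zpow_mem hy k

lemma eq_one_of_mem_zpowers_of_coprime {x y g : G} (hcop : (orderOf x).Coprime (orderOf y))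
    (hx : g ∈ zpowers x) (hy : g ∈ zpowers y) : g = 1 := by
  have hdisj := disjoint_of_coprime_natCard (H := zpowers x) (K := zpowers y)
    (by rwa [Nat.card_zpowers, Nat.card_zpowers])
  exact disjoint_def.mp hdisj hx hy

theorem one_notMem_subProds_replicate_add_replicate {x y : G} {a b : ℕ}
    (hconj : x⁻¹ * y * x ∈ zpowers y) (hcop : (orderOf x).Coprime (orderOf y)) (hxy : x ≠ y)
    (ha : a < orderOf x) (hb : b < orderOf y) :
    (1 : G) ∉ subProds (Multiset.replicate a x + Multiset.replicate b y) := by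
  classical
  rintro ⟨_, hle, hne, l, rfl, hl⟩
  have hmem : ∀ g ∈ l, g = x ∨ g = y := fun g hg =>
    (Multiset.mem_add.mp (Multiset.mem_of_le hle hg)).imp Multiset.eq_of_mem_replicate
      Multiset.eq_of_mem_replicate
  obtain ⟨h, hh, hprod⟩ := List.exists_prod_eq_pow_count_mul (conj_mem_zpowers_of_conj_mem hconj)
    fun g hg => (hmem g hg).imp_right fun hgy => by subst hgy; exact mem_zpowers g
  have hxpow : x ^ l.count x = 1 := by
    rw [hl, eq_comm, ← eq_inv_iff_mul_eq_one] at hprod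
    exact eq_one_of_mem_zpowers_of_coprime hcop (npow_mem_zpowers x _) (hprod ▸ inv_mem hh)
  have hcount : l.count x = 0 := by
    have := Multiset.count_le_of_le x hle
    simp only [Multiset.coe_count, Multiset.count_add, Multiset.count_replicate_self,
      Multiset.count_replicate, hxy.symm, if_false, add_zero] at this
    exact Nat.eq_zero_of_dvd_of_lt (orderOf_dvd_of_pow_eq_one hxpow) (by omega)
  obtain ⟨n, rfl⟩ : ∃ n, l = List.replicate n y := ⟨l.length, List.eq_replicate_iff.mpr
    ⟨rfl, fun g hg => (hmem g hg).resolve_left fun hgx => List.count_eq_zero.mp hcount (hgx ▸ hg)⟩⟩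
  have hn : n ≤ b := by
    have := Multiset.count_le_of_le y hle
    simpa [Multiset.count_replicate, hxy] using this
  rw [List.prod_replicate] at hl
  have := Nat.eq_zero_of_dvd_of_lt (orderOf_dvd_of_pow_eq_one hl) (by omega)
  exact hne (by simp [this])

end

theorem stmt_8_general (p m r : ℕ) (G : Type*) [Group G] [Fintype G] (x y : G)
    (hp : p.Prime) (hm : 0 < m)
    (hox : orderOf x = p) (hoy : orderOf y = m)
    (hrel : x⁻¹ * y * x = y ^ r)
    (hgcd : Nat.gcd (p * (r - 1)) m = 1) :
    (1 : G) ∉ subProds (Multiset.replicate (p - 1) x + Multiset.replicate (m - 1) y) ∧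
      m + p - 2 ≤ dG G := by
  subst hox hoy
  have hcop := Nat.Coprime.coprime_mul_right hgcd
  have hxy : x ≠ y := by
    rintro rfl
    exact hp.ne_one ((Nat.coprime_self _).mp hcop)
  have hfree := one_notMem_subProds_replicate_add_replicate (hrel ▸ npow_mem_zpowers y r) hcop
    hxy (Nat.sub_lt hp.pos one_pos) (Nat.sub_lt hm one_pos)
  refine ⟨hfree, ?_⟩
  have := card_le_dG hfree
  simp only [Multiset.card_add, Multiset.card_replicate] at this
  omega

theorem stmt_8 (p m r : ℕ) (G : Type*) [Group G] [Fintype G] (x y : G)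
    (hp : p.Prime) (hm : 0 < m) (hr : 0 < r)
    (hcard : Fintype.card G = p * m)
    (hox : orderOf x = p) (hoy : orderOf y = m)
    (hrel : x⁻¹ * y * x = y ^ r)
    (hgen : Subgroup.closure ({x, y} : Set G) = ⊤)
    (hpmin : ∀ q : ℕ, q.Prime → q ∣ p * m → p ≤ q)
    (hgcd : Nat.gcd (p * (r - 1)) m = 1) :
    (1 : G) ∉ subProds (Multiset.replicate (p - 1) x + Multiset.replicate (m - 1) y) ∧
      m + p - 2 ≤ dG G :=
  stmt_8_general p m r G x y hp hm hox hoy hrel hgcd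
end

section
/- Let G = ⟨x, y | x^p = y^m = 1, x^{-1} y x = y^r⟩ with p the smallest prime divisor of |G| and gcd(p(r-1), m) = 1, and let N = ⟨y⟩ with canonical projection φ : G → G/N ≅ C_p. Let T = g_1·…·g_t be a sequence over G such that φ(T) is a minimal product-one sequence over G/N, and let u ∈ π(T). Then there exist pairwise distinct s_1, …, s_t ∈ [0, p-1] such that {u^(r^{s_1}), …, u^(r^{s_t})} ⊆ π(T); moreover if u ≠ 1 then the elements u^(r^{s_1}), …, u^(r^{s_t}) are pairwise distinct. -/
/-!
The quotient `G ⧸ N` is cyclic, generated by the image of `x`. Write `u = g₁ ⋯ gₜ`. Since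
`φ(T)` is a minimal product-one sequence, no nonempty proper segment `gᵢ₊₁ ⋯ gⱼ` maps to `1`,
so the `t` prefix products `g₁ ⋯ gᵢ` (`0 ≤ i < t`) lie in pairwise distinct cosets `x^{sᵢ} N`.
Rotating the ordering to `gᵢ₊₁ ⋯ gₜ g₁ ⋯ gᵢ` conjugates `u` by the `i`-th prefix; as `u ∈ N`
and `N = ⟨y⟩` is abelian, conjugating `u` by any element of `x^s N` gives `u^{r^s}`.

If `u^{r^b} = u^{r^c}` with `b < c < p`, then `x^{c-b}`, hence `x` itself (as `p` is prime),
centralizes `w = u^{r^b}`, so `w^{r-1} = 1`; together with `w^m = 1` and `gcd(r-1, m) = 1` this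
forces `w = 1` and so `u = 1`.
-/

open Subgroup

section piSet

variable {G H : Type*} [Group G] [Group H]

lemma map_mem_piSet (f : G →* H) {S : Multiset G} {g : G} (hg : g ∈ piSet S) :
    f g ∈ piSet (S.map f) := by
  obtain ⟨l, rfl, rfl⟩ := hg
  exact ⟨l.map f, by simp, (map_list_prod f l).symm⟩

lemma piSet_subsingleton (hH : ∀ a b : H, Commute a b) (S : Multiset H) :
    (piSet S).Subsingleton := by
  rintro _ ⟨l₁, h₁, rfl⟩ _ ⟨l₂, h₂, rfl⟩
  exact (Multiset.coe_eq_coe.1 (h₁.trans h₂.symm)).prod_eq' (List.pairwise_of_forall hH)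

lemma conj_prod_take_mem_piSet (l : List G) (i : ℕ) :
    (l.take i).prod⁻¹ * l.prod * (l.take i).prod ∈ piSet (l : Multiset G) := by
  refine ⟨l.drop i ++ l.take i, ?_, ?_⟩
  · exact Multiset.coe_eq_coe.2 (List.perm_append_comm.trans (by rw [List.take_append_drop]))
  · have hl : l.prod = (l.take i).prod * (l.drop i).prod := by
      rw [← List.prod_append, List.take_append_drop]
    rw [List.prod_append, hl]
    group

lemma injective_map_prod_take_of_minimal (f : G →* H) (l : List G)
    (hmin : ∀ S < (l : Multiset G).map f, S ≠ 0 → (1 : H) ∉ piSet S) :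
    Function.Injective fun i : Fin l.length => f (l.take i).prod := by
  refine .of_lt_imp_ne fun i j hij heq => ?_
  set seg := (l.take j).drop i
  have hlen : seg.length = j - i := by simp [seg]
  have hsplit : l.take j = l.take i ++ seg := by
    rw [← List.take_append_drop i (l.take j), List.take_take, Nat.min_eq_left (by omega)]
  have hseg : f seg.prod = 1 := by
    simpa [hsplit, List.prod_append] using heq
  refine hmin (seg.map f) (lt_of_le_of_ne ?_ ?_) ?_ ⟨seg.map f, rfl, by rw [← map_list_prod, hseg]⟩
  · rw [Multiset.map_coe, Multiset.coe_le]
    exact (((List.drop_sublist _ _).trans (List.take_sublist _ _)).map f).subperm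
  · intro h
    have := congrArg Multiset.card h
    simp only [Multiset.coe_card, List.length_map, Multiset.card_map, hlen] at this
    omega
  · rw [Ne, Multiset.coe_eq_zero, List.map_eq_nil_iff, ← List.length_eq_zero_iff, hlen]
    omega

end piSet

section Metacyclic

variable {G : Type*} [Group G] {x y : G} {r : ℕ}

lemma inv_mul_mul_eq_pow_of_mem_zpowers (hrel : x⁻¹ * y * x = y ^ r) {v : G}
    (hv : v ∈ zpowers y) : x⁻¹ * v * x = v ^ r := by
  obtain ⟨k, rfl⟩ := hv
  rw [← zpow_natCast, ← zpow_mul, mul_comm, zpow_mul, zpow_natCast, ← hrel]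
  simpa using (conj_zpow (a := x⁻¹) (b := y) (i := k)).symm

lemma pow_inv_mul_mul_pow_eq_pow_of_mem_zpowers (hrel : x⁻¹ * y * x = y ^ r) {v : G}
    (hv : v ∈ zpowers y) (a : ℕ) : (x ^ a)⁻¹ * v * x ^ a = v ^ r ^ a := by
  induction a with
  | zero => simp
  | succ a ih =>
    calc (x ^ (a + 1))⁻¹ * v * x ^ (a + 1) = x⁻¹ * ((x ^ a)⁻¹ * v * x ^ a) * x := by group
      _ = v ^ r ^ (a + 1) := by
        rw [ih, inv_mul_mul_eq_pow_of_mem_zpowers hrel (pow_mem hv _), ← pow_mul, pow_succ]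

lemma inv_mul_mul_eq_pow_of_inv_mul_mem_zpowers (hrel : x⁻¹ * y * x = y ^ r) {v : G}
    (hv : v ∈ zpowers y) {g : G} {a : ℕ} (hg : (x ^ a)⁻¹ * g ∈ zpowers y) :
    g⁻¹ * v * g = v ^ r ^ a := by
  obtain ⟨n, hn, rfl⟩ : ∃ n ∈ zpowers y, g = x ^ a * n := ⟨_, hg, by group⟩
  calc (x ^ a * n)⁻¹ * v * (x ^ a * n) = n⁻¹ * ((x ^ a)⁻¹ * v * x ^ a * n) := by group
    _ = v ^ r ^ a := by
      rw [pow_inv_mul_mul_pow_eq_pow_of_mem_zpowers hrel hv,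
        setLike_mul_comm (pow_mem hv _) hn, inv_mul_cancel_left]

lemma eq_one_of_pow_eq_self {w : G} {m : ℕ} (hr : w ^ r = w) (hm : orderOf w ∣ m)
    (hcop : (r - 1).Coprime m) : w = 1 := by
  obtain _ | r := r
  · simpa using hr.symm
  · have hw : w ^ r = 1 := by simpa [pow_succ] using hr
    exact orderOf_eq_one_iff.1 <| Nat.eq_one_of_dvd_coprimes hcop (orderOf_dvd_of_pow_eq_one hw) hm

lemma eq_one_of_pow_pow_eq_of_mem_zpowers {p m : ℕ} (hrel : x⁻¹ * y * x = y ^ r)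
    (hp : p.Prime) (hx : orderOf x = p) (hy : orderOf y ∣ m) (hcop : (r - 1).Coprime m)
    {u : G} (hu : u ∈ zpowers y) {b c : ℕ} (hbc : b < c) (hcp : c < p)
    (heq : u ^ r ^ b = u ^ r ^ c) : u = 1 := by
  set w := u ^ r ^ b
  have hw : w ∈ zpowers y := pow_mem hu _
  obtain ⟨d, rfl⟩ := Nat.exists_eq_add_of_lt hbc
  have hfix : (x ^ (d + 1))⁻¹ * w * x ^ (d + 1) = w := by
    rw [pow_inv_mul_mul_pow_eq_pow_of_mem_zpowers hrel hw, ← pow_mul, ← pow_add, ← add_assoc,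
      ← heq]
  have hcomm_pow : Commute (x ^ (d + 1)) w := by
    rw [commute_iff_eq]
    nth_rw 1 [← hfix]
    group
  obtain ⟨e, he⟩ := exists_pow_eq_self_of_coprime (x := x) (n := d + 1)
    (hx ▸ (Nat.coprime_of_lt_prime d.succ_ne_zero (by omega) hp).symm)
  have hcomm : Commute x w := he ▸ hcomm_pow.pow_left e
  have hw1 : w = 1 := eq_one_of_pow_eq_self
    (by rw [← inv_mul_mul_eq_pow_of_mem_zpowers hrel hw, hcomm.inv_left.eq, inv_mul_cancel_right])
    ((orderOf_dvd_of_mem_zpowers hw).trans hy) hcop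
  have hconj : (x ^ b)⁻¹ * u * x ^ b = 1 :=
    (pow_inv_mul_mul_pow_eq_pow_of_mem_zpowers hrel hu b).trans hw1
  rwa [mul_eq_one_iff_eq_inv, mul_eq_left] at hconj

lemma injOn_pow_pow_of_mem_zpowers {p m : ℕ} (hrel : x⁻¹ * y * x = y ^ r) (hp : p.Prime)
    (hx : orderOf x = p) (hy : orderOf y ∣ m) (hcop : (r - 1).Coprime m) {u : G}
    (hu : u ∈ zpowers y) (hu1 : u ≠ 1) : (Set.Iio p).InjOn fun a => u ^ r ^ a := by
  intro b hb c hc hbc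
  by_contra hne
  rcases lt_or_gt_of_ne hne with h | h
  · exact hu1 (eq_one_of_pow_pow_eq_of_mem_zpowers hrel hp hx hy hcop hu h hc hbc)
  · exact hu1 (eq_one_of_pow_pow_eq_of_mem_zpowers hrel hp hx hy hcop hu h hb hbc.symm)

end Metacyclic

lemma exists_pow_lt_orderOf_eq_of_closure_pair_eq_top {G : Type*} [Group G] {x y : G}
    (hgen : closure ({x, y} : Set G) = ⊤) {N : Subgroup G} [N.Normal] (hy : y ∈ N)
    (hx : IsOfFinOrder x) (g : G ⧸ N) : ∃ a < orderOf x, (x : G ⧸ N) ^ a = g := by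
  classical
  obtain ⟨g, rfl⟩ := QuotientGroup.mk_surjective g
  have hle : closure ({x, y} : Set G) ≤ (zpowers (x : G ⧸ N)).comap (QuotientGroup.mk' N) := by
    rw [closure_le]
    rintro _ (rfl | rfl)
    · exact mem_zpowers _
    · rw [SetLike.mem_coe, mem_comap, QuotientGroup.mk'_apply, (QuotientGroup.eq_one_iff _).2 hy]
      exact one_mem _
  have hg : (g : G ⧸ N) ∈ zpowers (x : G ⧸ N) := hle (hgen ▸ mem_top g)
  obtain ⟨a, ha, hag⟩ := Finset.mem_image.1
    (((QuotientGroup.mk' N).isOfFinOrder hx).mem_zpowers_iff_mem_range_orderOf.1 hg)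
  exact ⟨a, (Finset.mem_range.1 ha).trans_le
    (Nat.le_of_dvd hx.orderOf_pos (orderOf_map_dvd (QuotientGroup.mk' N) x)), hag⟩

theorem stmt_13_general (p m r : ℕ) (G : Type*) [Group G] (x y : G)
    (hp : p.Prime)
    (hox : orderOf x = p) (hoy : orderOf y = m)
    (hrel : x⁻¹ * y * x = y ^ r)
    (hgen : Subgroup.closure ({x, y} : Set G) = ⊤)
    (hgcd : Nat.gcd (p * (r - 1)) m = 1)
    (N : Subgroup G) [N.Normal] (hNy : N = Subgroup.zpowers y)
    (T : Multiset G)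
    (hone : (1 : G ⧸ N) ∈ piSet (T.map (QuotientGroup.mk' N)))
    (hminimal : ∀ T' : Multiset (G ⧸ N), T' < T.map (QuotientGroup.mk' N) → T' ≠ 0 →
      (1 : G ⧸ N) ∉ piSet T')
    (u : G) (hu : u ∈ piSet T) :
    ∃ s : Fin (Multiset.card T) → ℕ, Function.Injective s ∧ (∀ i, s i ≤ p - 1) ∧
      (∀ i, u ^ (r ^ (s i)) ∈ piSet T) ∧
      (u ≠ 1 → Function.Injective fun i => u ^ (r ^ (s i))) := by
  obtain ⟨l, rfl, rfl⟩ := hu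
  subst hNy
  have hpow : ∀ g : G ⧸ zpowers y, ∃ a < p, (x : G ⧸ zpowers y) ^ a = g :=
    hox ▸ exists_pow_lt_orderOf_eq_of_closure_pair_eq_top hgen (mem_zpowers y)
      (orderOf_pos_iff.1 (hox ▸ hp.pos))
  have hcomm : ∀ a b : G ⧸ zpowers y, Commute a b := by
    intro a b
    obtain ⟨i, -, rfl⟩ := hpow a
    obtain ⟨j, -, rfl⟩ := hpow b
    exact (Commute.refl _).pow_pow i j
  have hprod : l.prod ∈ zpowers y := (QuotientGroup.eq_one_iff _).1 <|
    piSet_subsingleton hcomm _ (map_mem_piSet _ ⟨l, rfl, rfl⟩) hone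
  choose a ha_lt ha_eq using fun i : Fin l.length => hpow (l.take i).prod
  have hconj (i : Fin l.length) :
      (l.take i).prod⁻¹ * l.prod * (l.take i).prod = l.prod ^ r ^ a i :=
    inv_mul_mul_eq_pow_of_inv_mul_mem_zpowers hrel hprod
      (QuotientGroup.eq.1 (by rw [QuotientGroup.mk_pow, ha_eq]))
  have hinj : Function.Injective a := fun i j h =>
    injective_map_prod_take_of_minimal _ l hminimal ((ha_eq i).symm.trans (h ▸ ha_eq j))
  refine ⟨a, hinj, fun i => Nat.le_sub_one_of_lt (ha_lt i),
    fun i => hconj i ▸ conj_prod_take_mem_piSet l i, fun hu1 i j h => hinj ?_⟩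
  exact injOn_pow_pow_of_mem_zpowers hrel hp hox hoy.dvd
    (Nat.Coprime.coprime_mul_left hgcd) hprod hu1 (ha_lt i) (ha_lt j) h

theorem stmt_13 (p m r : ℕ) (G : Type*) [Group G] [Fintype G] (x y : G)
    (hp : p.Prime) (hm : 0 < m) (hr : 0 < r)
    (hcard : Fintype.card G = p * m)
    (hox : orderOf x = p) (hoy : orderOf y = m)
    (hrel : x⁻¹ * y * x = y ^ r)
    (hgen : Subgroup.closure ({x, y} : Set G) = ⊤)
    (hpmin : ∀ q : ℕ, q.Prime → q ∣ p * m → p ≤ q)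
    (hgcd : Nat.gcd (p * (r - 1)) m = 1)
    (N : Subgroup G) [N.Normal] (hNy : N = Subgroup.zpowers y)
    (T : Multiset G)
    (hone : (1 : G ⧸ N) ∈ piSet (T.map (QuotientGroup.mk' N)))
    (hminimal : ∀ T' : Multiset (G ⧸ N), T' < T.map (QuotientGroup.mk' N) → T' ≠ 0 →
      (1 : G ⧸ N) ∉ piSet T')
    (u : G) (hu : u ∈ piSet T) :
    ∃ s : Fin (Multiset.card T) → ℕ, Function.Injective s ∧ (∀ i, s i ≤ p - 1) ∧
      (∀ i, u ^ (r ^ (s i)) ∈ piSet T) ∧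
      (u ≠ 1 → Function.Injective fun i => u ^ (r ^ (s i))) :=
  stmt_13_general p m r G x y hp hox hoy hrel hgen hgcd N hNy T hone hminimal u hu
end
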